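/- For subspaces and a unit vector: if Y₀ and Y are matrices with ‖Y − Y₀‖ ≤ δ in operator norm, rank Y₀ = rank Y = r, and the r-th singular value of Y₀ satisfies s_r(Y₀) > 2δ, then for any unit vector a, |sin∠(a, Ran Y) − sin∠(a, Ran Y₀)| ≤ 2δ / (s_r(Y₀) − δ), where sin∠(a, V) = ‖(I − Π_V) a‖ and Π_V is the orthogonal projection onto V. -/

import Mathlib

open scoped Matrix.Norms.L2Operator

/-- `sin` of the angle between a vector and a subspace: `‖(I − Π_V) a‖`ratio-free
(for unit vectors this is the sine of the principal angle). -/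
noncomputable def sinAngleVec {L : ℕ} (a : EuclideanSpace ℂ (Fin L))
    (V : Submodule ℂ (EuclideanSpace ℂ (Fin L))) : ℝ :=
  ‖a - (Submodule.orthogonalProjectionOnto V a : EuclideanSpace ℂ (Fin L))‖

/-- The `r`-th largest singular value of a matrix (1-indexed), i.e. the `r`-th largest
square root of an eigenvalue of `Yᴴ Y`. -/
noncomputable def nthSingularValue {L M : ℕ} (Y : Matrix (Fin L) (Fin M) ℂ) (r : ℕ) : ℝ :=
  ((Finset.univ.val.map fun i : Fin M =>
      Real.sqrt ((Matrix.isHermitian_conjTranspose_mul_self Y).eigenvalues i)).sort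
    (· ≥ ·)).getD (r - 1) 0

/-- Column span of a matrix, viewed inside Euclidean space. -/
noncomputable def colSpan {L M : ℕ} (Y : Matrix (Fin L) (Fin M) ℂ) :
    Submodule ℂ (EuclideanSpace ℂ (Fin L)) :=
  Submodule.span ℂ (Set.range fun q : Fin M => (WithLp.toLp 2 (fun p => Y p q) : EuclideanSpace ℂ (Fin L)))

/-! Let `s = s_r(Y₀)`. On the span `S` of the eigenvectors of `Y₀ᴴ Y₀` with nonzero eigenvalue,
which has dimension `r`, one has `‖Y₀ x‖ ≥ s ‖x‖`, hence `‖Y x‖ ≥ (s - δ) ‖x‖`. As both ranks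
equal `r`, both matrices map `S` onto their column spans, so every `Y₀ x` lies within
`δ ‖x‖ ≤ (δ / s) ‖Y₀ x‖` of `Y x ∈ Ran Y`, and every `Y x` within `(δ / (s - δ)) ‖Y x‖` of
`Y₀ x ∈ Ran Y₀`. Moving the projection of `a` onto one span to such a nearby point of the other
changes the distance from `a` by at most the relative error times `‖a‖`. -/

open scoped InnerProductSpace

theorem List.getD_mem_or_eq_default {α : Type*} (l : List α) (n : ℕ) (d : α) :
    l.getD n d ∈ l ∨ l.getD n d = d := by
  rcases lt_or_ge n l.length with hn | hn
  · exact .inl (List.getD_eq_getElem _ _ hn ▸ List.getElem_mem hn)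
  · exact .inr (List.getD_eq_default _ _ hn)

theorem List.getD_le_of_forall_le {α : Type*} [LinearOrder α] {l : List α} {a d : α}
    (hl : ∀ b ∈ l, b ≤ a) (hd : d ≤ a) (k : ℕ) : l.getD k d ≤ a := by
  rcases l.getD_mem_or_eq_default k d with h | h
  · exact hl _ h
  · rw [h]; exact hd

theorem List.Pairwise.getD_countP_sub_one_le {α : Type*} [LinearOrder α] {l : List α}
    (hl : l.Pairwise (· ≥ ·)) {d x : α} (hx : x ∈ l) (hdx : d < x) :
    l.getD (l.countP (d < ·) - 1) d ≤ x := by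
  induction l with
  | nil => simp at hx
  | cons a t ih =>
    obtain ⟨ha, ht⟩ := List.pairwise_cons.1 hl
    have hda : d < a := hdx.trans_le (by rcases List.mem_cons.1 hx with rfl | h; rfl; exact ha x h)
    rw [List.countP_cons_of_pos (by simpa using hda), Nat.add_sub_cancel]
    rcases List.mem_cons.1 hx with rfl | hxt
    · cases t.countP (d < ·) with
      | zero => simp
      | succ k => exact List.getD_le_of_forall_le ha hda.le k
    · obtain ⟨k, hk⟩ := Nat.exists_eq_add_one_of_ne_zero
        (List.countP_pos_iff (p := fun y ↦ Decidable.decide (d < y)) |>.2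
          ⟨x, hxt, decide_eq_true hdx⟩).ne'
      have := ih ht hxt
      rw [hk, Nat.add_sub_cancel] at this
      rwa [hk, List.getD_cons_succ]

section InnerProductSpace

variable {𝕜 E : Type*} [RCLike 𝕜] [NormedAddCommGroup E] [InnerProductSpace 𝕜 E]

theorem Submodule.norm_sub_starProjection_le {W : Submodule 𝕜 E} [W.HasOrthogonalProjection]
    (a : E) {w : E} (hw : w ∈ W) : ‖a - W.starProjection a‖ ≤ ‖a - w‖ := by
  rw [Submodule.starProjection_minimal]
  have hbdd : BddBelow (Set.range fun y : W ↦ ‖a - y‖) :=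
    ⟨0, Set.forall_mem_range.2 fun _ ↦ norm_nonneg _⟩
  exact ciInf_le hbdd ⟨w, hw⟩

theorem Submodule.norm_sub_starProjection_le_add (V W : Submodule 𝕜 E)
    [V.HasOrthogonalProjection] [W.HasOrthogonalProjection] {c : ℝ} (hc : 0 ≤ c)
    (h : ∀ v ∈ V, ∃ w ∈ W, ‖v - w‖ ≤ c * ‖v‖) (a : E) :
    ‖a - W.starProjection a‖ ≤ ‖a - V.starProjection a‖ + c * ‖a‖ := by
  set v := V.starProjection a
  obtain ⟨w, hwW, hvw⟩ := h v (V.starProjection_apply_mem a)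
  calc ‖a - W.starProjection a‖ ≤ ‖a - w‖ := W.norm_sub_starProjection_le a hwW
    _ ≤ ‖a - v‖ + ‖v - w‖ := norm_sub_le_norm_sub_add_norm_sub a v w
    _ ≤ ‖a - v‖ + c * ‖a‖ := by
      gcongr
      exact hvw.trans (by gcongr; exact V.norm_starProjection_apply_le a)

theorem Submodule.abs_norm_sub_starProjection_sub_le (V W : Submodule 𝕜 E)
    [V.HasOrthogonalProjection] [W.HasOrthogonalProjection] {c : ℝ} (hc : 0 ≤ c)
    (hVW : ∀ v ∈ V, ∃ w ∈ W, ‖v - w‖ ≤ c * ‖v‖) (hWV : ∀ w ∈ W, ∃ v ∈ V, ‖w - v‖ ≤ c * ‖w‖)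
    (a : E) : |‖a - W.starProjection a‖ - ‖a - V.starProjection a‖| ≤ c * ‖a‖ := by
  have := V.norm_sub_starProjection_le_add W hc hVW a
  have := W.norm_sub_starProjection_le_add V hc hWV a
  rw [abs_sub_le_iff]
  constructor <;> linarith

theorem OrthonormalBasis.re_inner_map_self_eq_sum {ι : Type*} [Fintype ι]
    (b : OrthonormalBasis ι 𝕜 E) {T : E →ₗ[𝕜] E} {μ : ι → ℝ}
    (hT : ∀ i, T (b i) = (μ i : 𝕜) • b i) (x : E) :
    RCLike.re ⟪x, T x⟫_𝕜 = ∑ i, μ i * ‖⟪b i, x⟫_𝕜‖ ^ 2 := by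
  nth_rw 2 [← b.sum_repr' x]
  simp only [map_sum, map_smul, hT, inner_sum, inner_smul_right]
  refine Finset.sum_congr rfl fun i _ ↦ ?_
  rw [← inner_conj_symm, mul_left_comm, RCLike.conj_mul, ← RCLike.ofReal_pow,
    ← RCLike.ofReal_mul, RCLike.ofReal_re, RCLike.norm_conj]

theorem OrthonormalBasis.mul_norm_sq_le_re_inner_map_self {ι : Type*} [Fintype ι]
    (b : OrthonormalBasis ι 𝕜 E) {T : E →ₗ[𝕜] E} {μ : ι → ℝ}
    (hT : ∀ i, T (b i) = (μ i : 𝕜) • b i) {c : ℝ} {x : E}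
    (hc : ∀ i, ⟪b i, x⟫_𝕜 ≠ 0 → c ≤ μ i) :
    c * ‖x‖ ^ 2 ≤ RCLike.re ⟪x, T x⟫_𝕜 := by
  rw [b.re_inner_map_self_eq_sum hT, ← b.sum_sq_norm_inner_right, Finset.mul_sum]
  refine Finset.sum_le_sum fun i _ ↦ ?_
  by_cases hi : ⟪b i, x⟫_𝕜 = 0
  · simp [hi]
  · exact mul_le_mul_of_nonneg_right (hc i hi) (by positivity)

end InnerProductSpace

section Perturbation

variable {𝕜 E F : Type*} [RCLike 𝕜] [NormedAddCommGroup E] [NormedSpace 𝕜 E]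

theorem ContinuousLinearMap.sub_mul_norm_le_norm_apply [NormedAddCommGroup F] [NormedSpace 𝕜 F]
    {f g : E →L[𝕜] F} {S : Submodule 𝕜 E} {σ δ : ℝ} (hf : ∀ x ∈ S, σ * ‖x‖ ≤ ‖f x‖)
    (hfg : ‖g - f‖ ≤ δ) : ∀ x ∈ S, (σ - δ) * ‖x‖ ≤ ‖g x‖ := by
  intro x hx
  have hgf : ‖g x - f x‖ ≤ δ * ‖x‖ := (g - f).le_of_opNorm_le hfg x
  have := norm_sub_norm_le (f x) (g x)
  rw [norm_sub_rev] at this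
  nlinarith [hf x hx]

theorem Submodule.map_eq_range_of_mul_norm_le [NormedAddCommGroup F] [NormedSpace 𝕜 F]
    [FiniteDimensional 𝕜 E] {f : E →ₗ[𝕜] F} {S : Submodule 𝕜 E} {σ : ℝ} (hσ : 0 < σ)
    (hf : ∀ x ∈ S, σ * ‖x‖ ≤ ‖f x‖)
    (hS : Module.finrank 𝕜 S = Module.finrank 𝕜 (LinearMap.range f)) :
    S.map f = LinearMap.range f := by
  have hinj : Function.Injective (f.domRestrict S) := by
    rw [← LinearMap.ker_eq_bot, LinearMap.ker_eq_bot']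
    intro x hx
    have := hf x x.2
    rw [show f x = 0 from hx, norm_zero] at this
    exact Subtype.ext (norm_le_zero_iff.mp (nonpos_of_mul_nonpos_right this hσ))
  refine Submodule.eq_of_le_of_finrank_eq LinearMap.map_le_range ?_
  rw [← LinearMap.range_domRestrict, LinearMap.finrank_range_of_inj hinj, hS]

theorem ContinuousLinearMap.exists_mem_range_norm_sub_le [NormedAddCommGroup F]
    [NormedSpace 𝕜 F] {f g : E →L[𝕜] F} {S : Submodule 𝕜 E} {σ δ : ℝ} (hσ : 0 < σ)
    (hf : ∀ x ∈ S, σ * ‖x‖ ≤ ‖f x‖)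
    (hS : S.map (f : E →ₗ[𝕜] F) = LinearMap.range (f : E →ₗ[𝕜] F)) (hfg : ‖f - g‖ ≤ δ) :
    ∀ v ∈ LinearMap.range (f : E →ₗ[𝕜] F), ∃ w ∈ LinearMap.range (g : E →ₗ[𝕜] F),
      ‖v - w‖ ≤ δ / σ * ‖v‖ := by
  intro v hv
  rw [← hS] at hv
  obtain ⟨x, hx, rfl⟩ := hv
  refine ⟨g x, ⟨x, rfl⟩, ?_⟩
  have hδ : 0 ≤ δ := (norm_nonneg _).trans hfg
  calc ‖f x - g x‖ ≤ δ * ‖x‖ := (f - g).le_of_opNorm_le hfg x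
    _ ≤ δ * (‖f x‖ / σ) := by gcongr; rw [le_div_iff₀ hσ, mul_comm]; exact hf x hx
    _ = δ / σ * ‖f x‖ := by ring

theorem ContinuousLinearMap.abs_norm_sub_starProjection_range_sub_le [FiniteDimensional 𝕜 E]
    [NormedAddCommGroup F] [InnerProductSpace 𝕜 F] {f₀ f : E →L[𝕜] F} {S : Submodule 𝕜 E}
    {s δ : ℝ} (hS₀ : Module.finrank 𝕜 S = Module.finrank 𝕜 (LinearMap.range (f₀ : E →ₗ[𝕜] F)))
    (hS : Module.finrank 𝕜 S = Module.finrank 𝕜 (LinearMap.range (f : E →ₗ[𝕜] F)))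
    (hf₀ : ∀ x ∈ S, s * ‖x‖ ≤ ‖f₀ x‖) (hδ : ‖f - f₀‖ ≤ δ) (hδs : δ < s) (a : F) :
    |‖a - (LinearMap.range (f : E →ₗ[𝕜] F)).starProjection a‖ -
        ‖a - (LinearMap.range (f₀ : E →ₗ[𝕜] F)).starProjection a‖| ≤ δ / (s - δ) * ‖a‖ := by
  have hδ₀ : 0 ≤ δ := (norm_nonneg _).trans hδ
  have hf : ∀ x ∈ S, (s - δ) * ‖x‖ ≤ ‖f x‖ := ContinuousLinearMap.sub_mul_norm_le_norm_apply hf₀ hδ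
  have hmap₀ := Submodule.map_eq_range_of_mul_norm_le (by linarith) hf₀ hS₀
  have hmap := Submodule.map_eq_range_of_mul_norm_le (by linarith) hf hS
  refine Submodule.abs_norm_sub_starProjection_sub_le _ _ (by positivity) (fun v hv ↦ ?_)
    (ContinuousLinearMap.exists_mem_range_norm_sub_le (by linarith) hf hmap hδ) a
  obtain ⟨w, hw, hvw⟩ := ContinuousLinearMap.exists_mem_range_norm_sub_le (by linarith) hf₀ hmap₀
    (by rwa [norm_sub_rev]) v hv
  refine ⟨w, hw, hvw.trans ?_⟩
  gcongr
  linarith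

end Perturbation

namespace Matrix

open scoped ComplexOrder

theorem norm_toEuclideanLin_apply_sq {m n 𝕜 : Type*} [RCLike 𝕜] [Fintype m] [Fintype n]
    [DecidableEq m] [DecidableEq n] (A : Matrix m n 𝕜) (x : EuclideanSpace 𝕜 n) :
    ‖toEuclideanLin A x‖ ^ 2 = RCLike.re ⟪x, toEuclideanLin (Aᴴ * A) x⟫_𝕜 := by
  rw [toLpLin_mul (q := 2), LinearMap.comp_apply, toEuclideanLin_conjTranspose_eq_adjoint,
    LinearMap.adjoint_inner_right, inner_self_eq_norm_sq]

theorem IsHermitian.toEuclideanLin_eigenvectorBasis {n 𝕜 : Type*} [RCLike 𝕜] [Fintype n]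
    [DecidableEq n] {A : Matrix n n 𝕜} (hA : A.IsHermitian) (i : n) :
    toEuclideanLin A (hA.eigenvectorBasis i) = (hA.eigenvalues i : 𝕜) • hA.eigenvectorBasis i := by
  rw [toLpLin_apply, hA.mulVec_eigenvectorBasis, RCLike.real_smul_eq_coe_smul (K := 𝕜)]
  rfl

theorem finrank_range_toEuclideanLin {m n 𝕜 : Type*} [RCLike 𝕜] [Fintype m] [Fintype n]
    [DecidableEq n] (A : Matrix m n 𝕜) :
    Module.finrank 𝕜 (LinearMap.range (toEuclideanLin A)) = A.rank :=
  (A.rank_eq_finrank_range_toLin (PiLp.basisFun 2 𝕜 m) (PiLp.basisFun 2 𝕜 n)).symm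

variable {L M : ℕ}

theorem colSpan_eq_range (A : Matrix (Fin L) (Fin M) ℂ) :
    colSpan A = LinearMap.range (toEuclideanLin A) := by
  rw [LinearMap.range_eq_map, ← (EuclideanSpace.basisFun (Fin M) ℂ).toBasis.span_eq,
    Submodule.map_span, ← Set.range_comp, colSpan]
  congr
  ext q p
  simp [toLpLin_apply]

theorem nthSingularValue_nonneg (A : Matrix (Fin L) (Fin M) ℂ) (r : ℕ) :
    0 ≤ nthSingularValue A r := by
  set l := (Finset.univ.val.map
    fun j ↦ √((isHermitian_conjTranspose_mul_self A).eigenvalues j)).sort (· ≥ ·)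
  show 0 ≤ l.getD (r - 1) 0
  rcases l.getD_mem_or_eq_default (r - 1) 0 with h | h
  · obtain ⟨i, -, hi⟩ := Multiset.mem_map.1 ((Multiset.mem_sort _).1 h)
    exact hi ▸ Real.sqrt_nonneg _
  · exact h.ge

theorem nthSingularValue_rank_le_sqrt_eigenvalues (A : Matrix (Fin L) (Fin M) ℂ) {i : Fin M}
    (hi : (isHermitian_conjTranspose_mul_self A).eigenvalues i ≠ 0) :
    nthSingularValue A A.rank ≤ √((isHermitian_conjTranspose_mul_self A).eigenvalues i) := by
  set hH := isHermitian_conjTranspose_mul_self A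
  have hpos : ∀ j, 0 < √(hH.eigenvalues j) ↔ hH.eigenvalues j ≠ 0 := fun j ↦ by
    rw [Real.sqrt_pos, (eigenvalues_conjTranspose_mul_self_nonneg A j).lt_iff_ne']
  set l := (Finset.univ.val.map fun j ↦ √(hH.eigenvalues j)).sort (· ≥ ·)
  have hcount : l.countP (0 < ·) = A.rank := by
    rw [← rank_conjTranspose_mul_self, hH.rank_eq_card_non_zero_eigs, Fintype.card_subtype,
      ← Multiset.coe_countP, Multiset.sort_eq, Multiset.countP_map]
    simp_rw [hpos]
    rfl
  have hsorted : l.Pairwise (· ≥ ·) := Multiset.pairwise_sort _ _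
  have hmem : √(hH.eigenvalues i) ∈ l :=
    (Multiset.mem_sort _).2 (Multiset.mem_map_of_mem _ (Finset.mem_univ_val i))
  have := hsorted.getD_countP_sub_one_le hmem ((hpos i).2 hi)
  rw [hcount] at this
  exact this

theorem exists_finrank_eq_rank_nthSingularValue_mul_norm_le (A : Matrix (Fin L) (Fin M) ℂ) :
    ∃ S : Submodule ℂ (EuclideanSpace ℂ (Fin M)), Module.finrank ℂ S = A.rank ∧
      ∀ x ∈ S, nthSingularValue A A.rank * ‖x‖ ≤ ‖toEuclideanLin A x‖ := by
  set hH := isHermitian_conjTranspose_mul_self A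
  set b := hH.eigenvectorBasis
  refine ⟨Submodule.span ℂ (Set.range (b ∘ Subtype.val (p := (hH.eigenvalues · ≠ 0)))), ?_,
    fun x hx ↦ ?_⟩
  · rw [finrank_span_eq_card ((b.orthonormal.comp _ Subtype.val_injective).linearIndependent),
      ← hH.rank_eq_card_non_zero_eigs, rank_conjTranspose_mul_self]
  set s := nthSingularValue A A.rank
  have hs : 0 ≤ s := nthSingularValue_nonneg A A.rank
  have hperp : ∀ i, hH.eigenvalues i = 0 → ⟪b i, x⟫_ℂ = 0 := fun i hi ↦
    Submodule.mem_orthogonal_singleton_iff_inner_right.1 <| Submodule.span_le.2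
      (Set.range_subset_iff.2 fun j ↦ Submodule.mem_orthogonal_singleton_iff_inner_right.2 <|
        b.orthonormal.2 fun hij ↦ j.2 (hij ▸ hi)) hx
  have hsq : s ^ 2 * ‖x‖ ^ 2 ≤ ‖toEuclideanLin A x‖ ^ 2 := by
    rw [norm_toEuclideanLin_apply_sq]
    refine b.mul_norm_sq_le_re_inner_map_self hH.toEuclideanLin_eigenvectorBasis fun i hi ↦ ?_
    exact (Real.le_sqrt hs (eigenvalues_conjTranspose_mul_self_nonneg A i)).1
      (nthSingularValue_rank_le_sqrt_eigenvalues A (mt (hperp i) hi))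
  rw [← mul_pow] at hsq
  exact (pow_le_pow_iff_left₀ (by positivity) (norm_nonneg _) two_ne_zero).1 hsq

end Matrix

theorem sinAngleVec_eq {L : ℕ} (a : EuclideanSpace ℂ (Fin L))
    (V : Submodule ℂ (EuclideanSpace ℂ (Fin L))) :
    sinAngleVec a V = ‖a - V.starProjection a‖ := by
  rw [Submodule.starProjection_apply]
  rfl

/-- Wedin-type perturbation bound: if `‖Y − Y₀‖ ≤ δ` in operator norm, both have rank `r`,
and `s_r(Y₀) > 2δ`, then for any unit vector `a`,
`|sin∠(a, Ran Y) − sin∠(a, Ran Y₀)| ≤ 2δ/(s_r(Y₀) − δ)`. -/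
theorem wedin_angle_perturbation {L M : ℕ} (Y₀ Y : Matrix (Fin L) (Fin M) ℂ)
    (δ : ℝ) (hδ : ‖Y - Y₀‖ ≤ δ) (r : ℕ)
    (hr₀ : Y₀.rank = r) (hr : Y.rank = r)
    (hs : nthSingularValue Y₀ r > 2 * δ)
    (a : EuclideanSpace ℂ (Fin L)) (ha : ‖a‖ = 1) :
    |sinAngleVec a (colSpan Y) - sinAngleVec a (colSpan Y₀)| ≤
      2 * δ / (nthSingularValue Y₀ r - δ) := by
  -- `‖A‖` is by definition the operator norm of `T A` (`Matrix.l2_opNorm_def`)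
  let T := Matrix.toEuclideanLin.trans (LinearMap.toContinuousLinearMap :
    (EuclideanSpace ℂ (Fin M) →ₗ[ℂ] EuclideanSpace ℂ (Fin L)) ≃ₗ[ℂ] _)
  obtain ⟨S, hS, hY₀⟩ := Y₀.exists_finrank_eq_rank_nthSingularValue_mul_norm_le
  rw [hr₀] at hS hY₀
  have hδ₀ : 0 ≤ δ := (norm_nonneg _).trans hδ
  have key := ContinuousLinearMap.abs_norm_sub_starProjection_range_sub_le
    (f₀ := T Y₀) (f := T Y) (δ := δ)
    (hS.trans (hr₀ ▸ (Y₀.finrank_range_toEuclideanLin).symm))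
    (hS.trans (hr ▸ (Y.finrank_range_toEuclideanLin).symm)) hY₀
    (by rw [← map_sub]; exact hδ) (by linarith) a
  rw [sinAngleVec_eq, sinAngleVec_eq, Y.colSpan_eq_range, Y₀.colSpan_eq_range]
  refine key.trans ?_
  rw [ha, mul_one]
  gcongr
  · linarith
  · linarith
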